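/- Let G : SimpleGraph V and G' : SimpleGraph V' be locally finite simple graphs (each vertex has a finite neighbour set, with neighborFinset available), let S be a type of local states, and let F : S → Multiset S → S. Define one synchronous round on G by stepG x v = F (x v) (Multiset.map x (G.neighborFinset v).val), and analogously stepG' on G'. Suppose φ : V → V' is a local isomorphism (graph covering map): for every v : V, φ maps the neighbour set of v in G bijectively onto the neighbour set of φ v in G' (Set.BijOn φ (G.neighborSet v) (G'.neighborSet (φ v))). Then for every y : V' → S and every k : ℕ, stepG^[k] (y ∘ φ) = (stepG'^[k] y) ∘ φ. -/

import Mathlib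

/-- One synchronous round on a locally finite graph `G`: every node updates its state
as a function of its own state and the multiset of its neighbours' states. -/
def coverStep {V S : Type*} (G : SimpleGraph V) [G.LocallyFinite]
    (F : S → Multiset S → S) (x : V → S) (v : V) : S :=
  F (x v) (Multiset.map x (G.neighborFinset v).val)

theorem Finset.val_map_of_bijOn {α β : Type*} [DecidableEq β] {s : Finset α} {t : Finset β}
    {f : α → β} (h : Set.BijOn f s t) : s.val.map f = t.val := by
  rw [← Finset.image_val_of_injOn h.injOn]
  congr 1
  exact Finset.coe_injective (by rw [Finset.coe_image, h.image_eq])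

theorem SimpleGraph.neighborFinset_val_map_of_bijOn {V V' : Type*} {G : SimpleGraph V}
    {G' : SimpleGraph V'} [G.LocallyFinite] [G'.LocallyFinite] {φ : V → V'} {v : V}
    (h : Set.BijOn φ (G.neighborSet v) (G'.neighborSet (φ v))) :
    (G.neighborFinset v).val.map φ = (G'.neighborFinset (φ v)).val := by
  classical
  exact Finset.val_map_of_bijOn (by simpa only [SimpleGraph.coe_neighborFinset] using h)

theorem semiconj_comp_coverStep {V V' S : Type*} {G : SimpleGraph V} {G' : SimpleGraph V'}
    [G.LocallyFinite] [G'.LocallyFinite] (F : S → Multiset S → S) {φ : V → V'}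
    (hφ : ∀ v : V, Set.BijOn φ (G.neighborSet v) (G'.neighborSet (φ v))) :
    Function.Semiconj (· ∘ φ) (coverStep G' F) (coverStep G F) := fun y ↦ by
  funext v
  simp only [coverStep, Function.comp_apply,
    ← SimpleGraph.neighborFinset_val_map_of_bijOn (hφ v), Multiset.map_map]

theorem stmt_5 {V V' S : Type*} (G : SimpleGraph V) (G' : SimpleGraph V')
    [G.LocallyFinite] [G'.LocallyFinite] (F : S → Multiset S → S) (φ : V → V')
    (hφ : ∀ v : V, Set.BijOn φ (G.neighborSet v) (G'.neighborSet (φ v))) :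
    ∀ (y : V' → S) (k : ℕ),
      (coverStep G F)^[k] (y ∘ φ) = ((coverStep G' F)^[k] y) ∘ φ :=
  fun y k ↦ ((semiconj_comp_coverStep F hφ).iterate_right k y).symm
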